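/- Let k be a field of characteristic zero, (A, ∗, ∘, ϖ) a quasi-Frobenius pre-Poisson algebra, (B, ⋄, ω) a quadratic perm algebra, and (A ⊗ B, ·, [−,−]) the induced Poisson algebra. Define the bilinear form 𝔅 on A ⊗ B by 𝔅(a₁ ⊗ b₁, a₂ ⊗ b₂) = ϖ(a₁, a₂)·ω(b₁, b₂). Then 𝔅 is antisymmetric and nondegenerate and satisfies both cyclic conditions 𝔅(u₁·u₂, u₃) + 𝔅(u₂·u₃, u₁) + 𝔅(u₃·u₁, u₂) = 0 and 𝔅([u₁, u₂], u₃) + 𝔅([u₂, u₃], u₁) + 𝔅([u₃, u₁], u₂) = 0 for all u₁, u₂, u₃ ∈ A ⊗ B; that is, (A ⊗ B, ·, [−,−], 𝔅) is a quasi-Frobenius Poisson algebra. -/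

import Mathlib

open TensorProduct

noncomputable section

def IsZinbiel {k A : Type} [Field k] [AddCommGroup A] [Module k A]
    (ast : A →ₗ[k] A →ₗ[k] A) : Prop :=
  ∀ a₁ a₂ a₃ : A, ast a₁ (ast a₂ a₃) = ast (ast a₁ a₂) a₃ + ast (ast a₂ a₁) a₃

def IsPreLie {k A : Type} [Field k] [AddCommGroup A] [Module k A]
    (circ : A →ₗ[k] A →ₗ[k] A) : Prop :=
  ∀ a₁ a₂ a₃ : A,
    circ (circ a₁ a₂) a₃ - circ a₁ (circ a₂ a₃)
      = circ (circ a₂ a₁) a₃ - circ a₂ (circ a₁ a₃)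

def IsPerm {k B : Type} [Field k] [AddCommGroup B] [Module k B]
    (dia : B →ₗ[k] B →ₗ[k] B) : Prop :=
  ∀ b₁ b₂ b₃ : B,
    dia b₁ (dia b₂ b₃) = dia (dia b₁ b₂) b₃ ∧
    dia (dia b₁ b₂) b₃ = dia (dia b₂ b₁) b₃

def IsPrePoisson {k A : Type} [Field k] [AddCommGroup A] [Module k A]
    (ast circ : A →ₗ[k] A →ₗ[k] A) : Prop :=
  IsZinbiel ast ∧ IsPreLie circ ∧
  (∀ a₁ a₂ a₃ : A,
    ast (circ a₁ a₂ - circ a₂ a₁) a₃ = circ a₁ (ast a₂ a₃) - ast a₂ (circ a₁ a₃)) ∧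
  (∀ a₁ a₂ a₃ : A,
    circ (ast a₁ a₂ + ast a₂ a₁) a₃ = ast a₁ (circ a₂ a₃) + ast a₂ (circ a₁ a₃))

def IsPoisson {k P : Type} [Field k] [AddCommGroup P] [Module k P]
    (mul br : P →ₗ[k] P →ₗ[k] P) : Prop :=
  (∀ u v : P, mul u v = mul v u) ∧
  (∀ u v w : P, mul (mul u v) w = mul u (mul v w)) ∧
  (∀ u v : P, br u v = - br v u) ∧
  (∀ u v w : P, br (br u v) w + br (br v w) u + br (br w u) v = 0) ∧
  (∀ u v w : P, br u (mul v w) = mul (br u v) w + mul v (br u w))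

def idm (k M : Type) [Field k] [AddCommGroup M] [Module k M] : M →ₗ[k] M :=
  LinearMap.id

def tau (k M : Type) [Field k] [AddCommGroup M] [Module k M] :
    M ⊗[k] M →ₗ[k] M ⊗[k] M :=
  (TensorProduct.comm k M M).toLinearMap

def unassoc (k M : Type) [Field k] [AddCommGroup M] [Module k M] :
    M ⊗[k] (M ⊗[k] M) →ₗ[k] (M ⊗[k] M) ⊗[k] M :=
  (TensorProduct.assoc k M M M).symm.toLinearMap

def intch (k A B : Type) [Field k] [AddCommGroup A] [Module k A]
    [AddCommGroup B] [Module k B] :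
    (A ⊗[k] A) ⊗[k] (B ⊗[k] B) →ₗ[k] (A ⊗[k] B) ⊗[k] (A ⊗[k] B) :=
  (TensorProduct.tensorTensorTensorComm k A A B B).toLinearMap

def IsZinbielCo {k A : Type} [Field k] [AddCommGroup A] [Module k A]
    (ϑ : A →ₗ[k] A ⊗[k] A) : Prop :=
  ∀ a : A,
    TensorProduct.map ϑ (idm k A) (ϑ a)
      + TensorProduct.map (tau k A) (idm k A) (TensorProduct.map ϑ (idm k A) (ϑ a))
    = unassoc k A (TensorProduct.map (idm k A) ϑ (ϑ a))

def IsPermCo {k B : Type} [Field k] [AddCommGroup B] [Module k B]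
    (ν : B →ₗ[k] B ⊗[k] B) : Prop :=
  ∀ b : B,
    TensorProduct.map ν (idm k B) (ν b)
      = unassoc k B (TensorProduct.map (idm k B) ν (ν b)) ∧
    TensorProduct.map ν (idm k B) (ν b)
      = TensorProduct.map (tau k B) (idm k B) (TensorProduct.map ν (idm k B) (ν b))

def IsPreLieCo {k A : Type} [Field k] [AddCommGroup A] [Module k A]
    (θ : A →ₗ[k] A ⊗[k] A) : Prop :=
  ∀ a : A,
    unassoc k A (TensorProduct.map (idm k A) θ (θ a))
      - TensorProduct.map (tau k A) (idm k A)
          (unassoc k A (TensorProduct.map (idm k A) θ (θ a)))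
    = TensorProduct.map θ (idm k A) (θ a)
      - TensorProduct.map (tau k A) (idm k A) (TensorProduct.map θ (idm k A) (θ a))

def Zexp {k A : Type} [Field k] [AddCommGroup A] [Module k A]
    (ast : A →ₗ[k] A →ₗ[k] A) {p : ℕ} (x y : Fin p → A) : (A ⊗[k] A) ⊗[k] A :=
  ∑ i : Fin p, ∑ j : Fin p,
    (((ast (x i) (x j)) ⊗ₜ[k] (y j)) ⊗ₜ[k] (y i)
      + ((y j) ⊗ₜ[k] (ast (x i) (x j))) ⊗ₜ[k] (y i)
      + ((x i) ⊗ₜ[k] (x j)) ⊗ₜ[k] (ast (y i) (y j))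
      + ((x j) ⊗ₜ[k] (x i)) ⊗ₜ[k] (ast (y i) (y j))
      - ((x i) ⊗ₜ[k] (ast (y i) (x j))) ⊗ₜ[k] (y j)
      - ((x j) ⊗ₜ[k] (ast (x i) (y j))) ⊗ₜ[k] (y i)
      - ((ast (x i) (y j)) ⊗ₜ[k] (x j)) ⊗ₜ[k] (y i)
      - ((ast (y i) (x j)) ⊗ₜ[k] (x i)) ⊗ₜ[k] (y j))

def PLexp {k A : Type} [Field k] [AddCommGroup A] [Module k A]
    (circ : A →ₗ[k] A →ₗ[k] A) {p : ℕ} (x y : Fin p → A) : (A ⊗[k] A) ⊗[k] A :=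
  ∑ i : Fin p, ∑ j : Fin p,
    (((circ (x i) (x j)) ⊗ₜ[k] (y j)) ⊗ₜ[k] (y i)
      + ((x j) ⊗ₜ[k] (circ (x i) (y j))) ⊗ₜ[k] (y i)
      + ((circ (y i) (x j)) ⊗ₜ[k] (x i)) ⊗ₜ[k] (y j)
      + ((x j) ⊗ₜ[k] (x i)) ⊗ₜ[k] (circ (y i) (y j))
      - ((y j) ⊗ₜ[k] (circ (x i) (x j))) ⊗ₜ[k] (y i)
      - ((x i) ⊗ₜ[k] (circ (y i) (x j))) ⊗ₜ[k] (y j)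
      - ((circ (x i) (y j)) ⊗ₜ[k] (x j)) ⊗ₜ[k] (y i)
      - ((x i) ⊗ₜ[k] (x j)) ⊗ₜ[k] (circ (y i) (y j)))

def AYexp {k P : Type} [Field k] [AddCommGroup P] [Module k P]
    (m : P →ₗ[k] P →ₗ[k] P) {ι : Type} [Fintype ι] (u v : ι → P) :
    (P ⊗[k] P) ⊗[k] P :=
  ∑ α : ι, ∑ β : ι,
    (((m (u α) (u β)) ⊗ₜ[k] (v α)) ⊗ₜ[k] (v β)
      + ((u α) ⊗ₜ[k] (m (v α) (u β))) ⊗ₜ[k] (v β)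
      - ((u β) ⊗ₜ[k] (u α)) ⊗ₜ[k] (m (v α) (v β)))

def CYexp {k P : Type} [Field k] [AddCommGroup P] [Module k P]
    (br : P →ₗ[k] P →ₗ[k] P) {ι : Type} [Fintype ι] (u v : ι → P) :
    (P ⊗[k] P) ⊗[k] P :=
  ∑ α : ι, ∑ β : ι,
    (((br (u α) (u β)) ⊗ₜ[k] (v α)) ⊗ₜ[k] (v β)
      + ((u α) ⊗ₜ[k] (u β)) ⊗ₜ[k] (br (v α) (v β))
      + ((u α) ⊗ₜ[k] (br (v α) (u β))) ⊗ₜ[k] (v β))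

def sharp (k : Type) [Field k] {V : Type} [AddCommGroup V] [Module k V]
    (s : V ⊗[k] V) (ξ : V →ₗ[k] k) : V :=
  TensorProduct.lid k V (LinearMap.rTensor V ξ s)

abbrev PermB (k : Type) [Field k] : Type := ((ℤ × ℤ) × Fin 2) →₀ k

def bB (k : Type) [Field k] (i₁ i₂ : ℤ) (s : Fin 2) : PermB k :=
  Finsupp.single ((i₁, i₂), s) 1

/-!
Every identity in the statement is multilinear, so it suffices to check it on pure tensors
`aᵢ ⊗ₜ bᵢ`. There the perm identities bring each triple product in `B` to one of the three
normal forms `(bᵢ ⋄ bⱼ) ⋄ bₖ`, and the coefficients in `A` match by the Zinbiel, pre-Lie and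
compatibility identities. In the cyclic conditions, invariance and antisymmetry of `ω` relate the
values `ω (bᵢ ⋄ bⱼ) bₖ` for the six orders of `i, j, k`, and the two invariance conditions on `ϖ`
balance the remaining coefficients.
The form `𝔅` is `ϖ.tmul ω`; it is nondegenerate because `A ⊗ B → (A ⊗ B)^*` factors as
`ϖ^♭ ⊗ ω^♭` followed by the isomorphism `A^* ⊗ B^* ≃ (A ⊗ B)^*`.
-/

namespace TensorProduct

variable {R M N G : Type*} [CommSemiring R] [AddCommMonoid M] [Module R M]
  [AddCommMonoid N] [Module R N] [AddCommGroup G]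

theorem eq_zero_of_map_add_of_tmul {f : M ⊗[R] N → G}
    (htmul : ∀ m n, f (m ⊗ₜ n) = 0) (hadd : ∀ x y, f (x + y) = f x + f y) (x : M ⊗[R] N) :
    f x = 0 := by
  induction x using TensorProduct.induction_on with
  | zero => simpa using hadd 0 0
  | tmul m n => exact htmul m n
  | add x y hx hy => rw [hadd, hx, hy, add_zero]

theorem eq_zero₂_of_map_add_of_tmul {f : M ⊗[R] N → M ⊗[R] N → G}
    (htmul : ∀ m₁ n₁ m₂ n₂, f (m₁ ⊗ₜ n₁) (m₂ ⊗ₜ n₂) = 0)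
    (hadd₁ : ∀ x x' y, f (x + x') y = f x y + f x' y)
    (hadd₂ : ∀ x y y', f x (y + y') = f x y + f x y') (x y : M ⊗[R] N) :
    f x y = 0 :=
  eq_zero_of_map_add_of_tmul (f := (f · y))
    (fun m₁ n₁ => eq_zero_of_map_add_of_tmul (htmul m₁ n₁) (hadd₂ _) y)
    (fun x x' => hadd₁ x x' y) x

theorem eq_zero₃_of_map_add_of_tmul {f : M ⊗[R] N → M ⊗[R] N → M ⊗[R] N → G}
    (htmul : ∀ m₁ n₁ m₂ n₂ m₃ n₃, f (m₁ ⊗ₜ n₁) (m₂ ⊗ₜ n₂) (m₃ ⊗ₜ n₃) = 0)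
    (hadd₁ : ∀ x x' y z, f (x + x') y z = f x y z + f x' y z)
    (hadd₂ : ∀ x y y' z, f x (y + y') z = f x y z + f x y' z)
    (hadd₃ : ∀ x y z z', f x y (z + z') = f x y z + f x y z')
    (x y z : M ⊗[R] N) : f x y z = 0 :=
  eq_zero_of_map_add_of_tmul (f := (f · y z))
    (fun m₁ n₁ => eq_zero₂_of_map_add_of_tmul (f := f (m₁ ⊗ₜ n₁)) (htmul m₁ n₁)
      (fun y y' z => hadd₂ _ y y' z) (hadd₃ _) y z)
    (fun x x' => hadd₁ x x' y z) x

end TensorProduct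

namespace LinearMap.BilinForm

variable {K V W : Type*} [Field K] [AddCommGroup V] [Module K V] [AddCommGroup W] [Module K W]

theorem tmul_antisymm {B₁ : LinearMap.BilinForm K V} {B₂ : LinearMap.BilinForm K W}
    (h₁ : ∀ x y, B₁ x y = B₁ y x) (h₂ : ∀ x y, B₂ x y = -B₂ y x) (x y : V ⊗[K] W) :
    B₁.tmul B₂ x y = -B₁.tmul B₂ y x := by
  refine sub_eq_zero.mp (TensorProduct.eq_zero₂_of_map_add_of_tmul
    (f := fun x y => B₁.tmul B₂ x y - -B₁.tmul B₂ y x) ?_ ?_ ?_ x y)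
  · intro a b a' b'
    simp only [tensorDistrib_tmul, smul_eq_mul, h₁ a', h₂ b']
    ring
  all_goals intros; simp only [map_add, LinearMap.add_apply]; abel

theorem separatingLeft_tmul [FiniteDimensional K V] [FiniteDimensional K W]
    {B₁ : LinearMap.BilinForm K V} {B₂ : LinearMap.BilinForm K W}
    (h₁ : B₁.SeparatingLeft) (h₂ : B₂.SeparatingLeft) : (B₁.tmul B₂).SeparatingLeft := by
  have hfactor : B₁.tmul B₂ = TensorProduct.dualDistrib K V W ∘ₗ TensorProduct.map B₁ B₂ := by
    refine TensorProduct.ext' fun a b => TensorProduct.ext' fun a' b' => ?_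
    simp [mul_comm]
  rw [LinearMap.separatingLeft_iff_ker_eq_bot, LinearMap.ker_eq_bot, hfactor]
  rw [LinearMap.separatingLeft_iff_ker_eq_bot, LinearMap.ker_eq_bot] at h₁ h₂
  exact (TensorProduct.dualDistribEquiv K V W).injective.comp
    (TensorProduct.map_injective_of_flat_flat _ _ h₁ h₂)

end LinearMap.BilinForm

section InducedPoisson

variable {k A B : Type} [Field k] [AddCommGroup A] [Module k A] [AddCommGroup B] [Module k B]

abbrev IsInducedMul (ast : A →ₗ[k] A →ₗ[k] A) (dia : B →ₗ[k] B →ₗ[k] B)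
    (m : A ⊗[k] B →ₗ[k] A ⊗[k] B →ₗ[k] A ⊗[k] B) : Prop :=
  ∀ (a₁ a₂ : A) (b₁ b₂ : B),
    m (a₁ ⊗ₜ[k] b₁) (a₂ ⊗ₜ[k] b₂) = (ast a₁ a₂) ⊗ₜ[k] (dia b₁ b₂) + (ast a₂ a₁) ⊗ₜ[k] (dia b₂ b₁)

abbrev IsInducedBracket (circ : A →ₗ[k] A →ₗ[k] A) (dia : B →ₗ[k] B →ₗ[k] B)
    (br : A ⊗[k] B →ₗ[k] A ⊗[k] B →ₗ[k] A ⊗[k] B) : Prop :=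
  ∀ (a₁ a₂ : A) (b₁ b₂ : B),
    br (a₁ ⊗ₜ[k] b₁) (a₂ ⊗ₜ[k] b₂) = (circ a₁ a₂) ⊗ₜ[k] (dia b₁ b₂) - (circ a₂ a₁) ⊗ₜ[k] (dia b₂ b₁)

variable {ast circ : A →ₗ[k] A →ₗ[k] A} {dia : B →ₗ[k] B →ₗ[k] B}
  {m br : A ⊗[k] B →ₗ[k] A ⊗[k] B →ₗ[k] A ⊗[k] B}

theorem IsPerm.assoc (hdia : IsPerm dia) (b₁ b₂ b₃ : B) :
    dia b₁ (dia b₂ b₃) = dia (dia b₁ b₂) b₃ :=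
  (hdia b₁ b₂ b₃).1

theorem IsPerm.comm_left (hdia : IsPerm dia) (b₁ b₂ b₃ : B) :
    dia (dia b₁ b₂) b₃ = dia (dia b₂ b₁) b₃ :=
  (hdia b₁ b₂ b₃).2

theorem IsInducedMul.comm (hm : IsInducedMul ast dia m) (u v : A ⊗[k] B) : m u v = m v u := by
  refine sub_eq_zero.mp (TensorProduct.eq_zero₂_of_map_add_of_tmul
    (f := fun u v => m u v - m v u) ?_ ?_ ?_ u v)
  · intro a₁ b₁ a₂ b₂
    rw [hm, hm]
    abel
  all_goals intros; simp only [map_add, LinearMap.add_apply]; abel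

theorem IsInducedMul.assoc (hast : IsZinbiel ast) (hdia : IsPerm dia)
    (hm : IsInducedMul ast dia m) (u v w : A ⊗[k] B) : m (m u v) w = m u (m v w) := by
  refine sub_eq_zero.mp (TensorProduct.eq_zero₃_of_map_add_of_tmul
    (f := fun u v w => m (m u v) w - m u (m v w)) ?_ ?_ ?_ ?_ u v w)
  · intro a₁ b₁ a₂ b₂ a₃ b₃
    simp only [hm, map_add, LinearMap.add_apply, hdia.assoc]
    rw [hdia.comm_left b₂ b₁ b₃, hdia.comm_left b₃ b₁ b₂, hdia.comm_left b₃ b₂ b₁,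
      hast a₃ a₁ a₂, hast a₃ a₂ a₁, hast a₁ a₂ a₃, hast a₁ a₃ a₂]
    simp only [add_tmul]
    abel
  all_goals intros; simp only [map_add, LinearMap.add_apply]; abel

theorem IsInducedBracket.antisymm (hbr : IsInducedBracket circ dia br) (u v : A ⊗[k] B) :
    br u v = -br v u := by
  refine sub_eq_zero.mp (TensorProduct.eq_zero₂_of_map_add_of_tmul
    (f := fun u v => br u v - -br v u) ?_ ?_ ?_ u v)
  · intro a₁ b₁ a₂ b₂
    rw [hbr, hbr]
    abel
  all_goals intros; simp only [map_add, LinearMap.add_apply]; abel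

theorem IsInducedBracket.jacobi (hcirc : IsPreLie circ) (hdia : IsPerm dia)
    (hbr : IsInducedBracket circ dia br) (u v w : A ⊗[k] B) :
    br (br u v) w + br (br v w) u + br (br w u) v = 0 := by
  refine TensorProduct.eq_zero₃_of_map_add_of_tmul
    (f := fun u v w => br (br u v) w + br (br v w) u + br (br w u) v) ?_ ?_ ?_ ?_ u v w
  · intro a₁ b₁ a₂ b₂ a₃ b₃
    have hcirc' : ∀ x y z : A,
        circ (circ y x) z = circ (circ x y) z - circ x (circ y z) + circ y (circ x z) :=
      fun x y z => eq_add_of_sub_eq (hcirc x y z).symm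
    simp only [hbr, map_sub, LinearMap.sub_apply, hdia.assoc]
    rw [hdia.comm_left b₂ b₁ b₃, hdia.comm_left b₃ b₁ b₂, hdia.comm_left b₃ b₂ b₁,
      hcirc' a₁ a₂ a₃, hcirc' a₂ a₃ a₁, hcirc' a₃ a₁ a₂]
    simp only [add_tmul, sub_tmul]
    abel
  all_goals intros; simp only [map_add, LinearMap.add_apply]; abel

theorem IsInducedBracket.leibniz
    (hcomp₁ : ∀ a₁ a₂ a₃ : A,
      ast (circ a₁ a₂ - circ a₂ a₁) a₃ = circ a₁ (ast a₂ a₃) - ast a₂ (circ a₁ a₃))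
    (hcomp₂ : ∀ a₁ a₂ a₃ : A,
      circ (ast a₁ a₂ + ast a₂ a₁) a₃ = ast a₁ (circ a₂ a₃) + ast a₂ (circ a₁ a₃))
    (hdia : IsPerm dia) (hm : IsInducedMul ast dia m) (hbr : IsInducedBracket circ dia br)
    (u v w : A ⊗[k] B) : br u (m v w) = m (br u v) w + m v (br u w) := by
  refine sub_eq_zero.mp (TensorProduct.eq_zero₃_of_map_add_of_tmul
    (f := fun u v w => br u (m v w) - (m (br u v) w + m v (br u w))) ?_ ?_ ?_ ?_ u v w)
  · intro a₁ b₁ a₂ b₂ a₃ b₃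
    have hcomp₁' : ∀ x y z : A,
        circ x (ast y z) = ast (circ x y) z - ast (circ y x) z + ast y (circ x z) := by
      intro x y z
      have h := hcomp₁ x y z
      rw [map_sub, LinearMap.sub_apply] at h
      rw [h]
      abel
    have hcomp₂' : ∀ x y z : A,
        circ (ast x y) z = ast x (circ y z) + ast y (circ x z) - circ (ast y x) z := by
      intro x y z
      rw [← hcomp₂, map_add, LinearMap.add_apply]
      abel
    simp only [hm, hbr, map_add, map_sub, LinearMap.sub_apply, hdia.assoc]
    rw [hdia.comm_left b₂ b₁ b₃, hdia.comm_left b₃ b₁ b₂, hdia.comm_left b₃ b₂ b₁,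
      hcomp₁' a₁ a₂ a₃, hcomp₁' a₁ a₃ a₂, hcomp₂' a₂ a₃ a₁]
    simp only [add_tmul, sub_tmul]
    abel
  all_goals intros; simp only [map_add, LinearMap.add_apply]; abel

theorem IsPrePoisson.isPoisson_induced (hA : IsPrePoisson ast circ) (hdia : IsPerm dia)
    (hm : IsInducedMul ast dia m) (hbr : IsInducedBracket circ dia br) : IsPoisson m br :=
  ⟨hm.comm, hm.assoc hA.1 hdia, hbr.antisymm, hbr.jacobi hA.2.1 hdia,
    hbr.leibniz hA.2.2.1 hA.2.2.2 hdia hm⟩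

end InducedPoisson

section InducedForm

variable {k A B : Type} [Field k] [AddCommGroup A] [Module k A] [AddCommGroup B] [Module k B]
  {ast circ : A →ₗ[k] A →ₗ[k] A} {dia : B →ₗ[k] B →ₗ[k] B}
  {m br : A ⊗[k] B →ₗ[k] A ⊗[k] B →ₗ[k] A ⊗[k] B} {ϖ : LinearMap.BilinForm k A}
  {ω : LinearMap.BilinForm k B}

theorem apply_dia_eq_sub (hω₁ : ∀ b₁ b₂ : B, ω b₁ b₂ = - ω b₂ b₁)
    (hω₃ : ∀ b₁ b₂ b₃ : B, ω (dia b₁ b₂) b₃ = ω b₁ (dia b₂ b₃ - dia b₃ b₂)) (b₁ b₂ b₃ : B) :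
    ω (dia b₁ b₂) b₃ = ω (dia b₃ b₂) b₁ - ω (dia b₂ b₃) b₁ := by
  rw [hω₃, map_sub, hω₁ b₁ (dia b₂ b₃), hω₁ b₁ (dia b₃ b₂)]
  ring

theorem IsInducedMul.cyclic_tmul (hϖsym : ∀ a₁ a₂ : A, ϖ a₁ a₂ = ϖ a₂ a₁)
    (hϖcoc : ∀ a₁ a₂ a₃ : A,
      ϖ (ast a₁ a₂ + ast a₂ a₁) a₃ = ϖ a₁ (ast a₂ a₃) + ϖ a₂ (ast a₁ a₃))
    (hω₁ : ∀ b₁ b₂ : B, ω b₁ b₂ = - ω b₂ b₁)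
    (hω₃ : ∀ b₁ b₂ b₃ : B, ω (dia b₁ b₂) b₃ = ω b₁ (dia b₂ b₃ - dia b₃ b₂))
    (hm : IsInducedMul ast dia m) (u₁ u₂ u₃ : A ⊗[k] B) :
    ϖ.tmul ω (m u₁ u₂) u₃ + ϖ.tmul ω (m u₂ u₃) u₁ + ϖ.tmul ω (m u₃ u₁) u₂ = 0 := by
  refine TensorProduct.eq_zero₃_of_map_add_of_tmul
    (f := fun u₁ u₂ u₃ => ϖ.tmul ω (m u₁ u₂) u₃ + ϖ.tmul ω (m u₂ u₃) u₁ + ϖ.tmul ω (m u₃ u₁) u₂)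
    ?_ ?_ ?_ ?_ u₁ u₂ u₃
  · intro a₁ b₁ a₂ b₂ a₃ b₃
    have hF : ∀ x y z : A,
        ϖ (ast x y) z + ϖ (ast y x) z = ϖ (ast y z) x + ϖ (ast x z) y := by
      intro x y z
      rw [← LinearMap.add_apply, ← map_add, hϖcoc, hϖsym x, hϖsym y]
    have hW := apply_dia_eq_sub hω₁ hω₃
    simp only [hm, map_add, LinearMap.add_apply, LinearMap.BilinForm.tensorDistrib_tmul,
      smul_eq_mul]
    linear_combination
      (ϖ (ast a₂ a₃) a₁) * (hW b₂ b₁ b₃ + hW b₂ b₃ b₁)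
      + (ϖ (ast a₃ a₂) a₁) * (- hW b₁ b₂ b₃ + hW b₂ b₁ b₃ + hW b₂ b₃ b₁)
      + (ϖ (ast a₃ a₁) a₂) * (hW b₃ b₁ b₂)
      + (ϖ (ast a₁ a₃) a₂) * (hW b₂ b₁ b₃ + hW b₃ b₁ b₂)
      + (ω (dia b₁ b₂) b₃) * (hF a₁ a₂ a₃ + hF a₂ a₃ a₁)
      - (ω (dia b₂ b₁) b₃) * (hF a₂ a₃ a₁)
  all_goals intros; simp only [map_add, LinearMap.add_apply]; ring

theorem IsInducedBracket.cyclic_tmul (hϖsym : ∀ a₁ a₂ : A, ϖ a₁ a₂ = ϖ a₂ a₁)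
    (hϖcoc' : ∀ a₁ a₂ a₃ : A,
      ϖ (circ a₁ a₂) a₃ - ϖ a₁ (circ a₂ a₃) = ϖ (circ a₂ a₁) a₃ - ϖ a₂ (circ a₁ a₃))
    (hω₁ : ∀ b₁ b₂ : B, ω b₁ b₂ = - ω b₂ b₁)
    (hω₃ : ∀ b₁ b₂ b₃ : B, ω (dia b₁ b₂) b₃ = ω b₁ (dia b₂ b₃ - dia b₃ b₂))
    (hbr : IsInducedBracket circ dia br) (u₁ u₂ u₃ : A ⊗[k] B) :
    ϖ.tmul ω (br u₁ u₂) u₃ + ϖ.tmul ω (br u₂ u₃) u₁ + ϖ.tmul ω (br u₃ u₁) u₂ = 0 := by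
  refine TensorProduct.eq_zero₃_of_map_add_of_tmul
    (f := fun u₁ u₂ u₃ =>
      ϖ.tmul ω (br u₁ u₂) u₃ + ϖ.tmul ω (br u₂ u₃) u₁ + ϖ.tmul ω (br u₃ u₁) u₂)
    ?_ ?_ ?_ ?_ u₁ u₂ u₃
  · intro a₁ b₁ a₂ b₂ a₃ b₃
    have hH : ∀ x y z : A,
        ϖ (circ x y) z - ϖ (circ y x) z = ϖ (circ y z) x - ϖ (circ x z) y := by
      intro x y z
      linear_combination hϖcoc' x y z + hϖsym x (circ y z) - hϖsym y (circ x z)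
    have hW := apply_dia_eq_sub hω₁ hω₃
    simp only [hbr, map_sub, LinearMap.sub_apply, LinearMap.BilinForm.tensorDistrib_tmul,
      smul_eq_mul]
    linear_combination
      (ϖ (circ a₂ a₃) a₁) * (hW b₂ b₁ b₃ + hW b₂ b₃ b₁)
      + (ϖ (circ a₃ a₂) a₁) * (hW b₁ b₂ b₃ - hW b₂ b₁ b₃ - hW b₂ b₃ b₁)
      + (ϖ (circ a₃ a₁) a₂) * (hW b₃ b₁ b₂)
      + (ϖ (circ a₁ a₃) a₂) * (- hW b₂ b₁ b₃ - hW b₃ b₁ b₂)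
      + (ω (dia b₁ b₂) b₃) * (hH a₁ a₂ a₃ + hH a₂ a₃ a₁)
      - (ω (dia b₂ b₁) b₃) * (hH a₂ a₃ a₁)
  all_goals intros; simp only [map_add, LinearMap.add_apply]; ring

end InducedForm

theorem statement18_general (k A B : Type) [Field k]
    [AddCommGroup A] [Module k A] [FiniteDimensional k A]
    [AddCommGroup B] [Module k B] [FiniteDimensional k B]
    (ast circ : A →ₗ[k] A →ₗ[k] A) (hA : IsPrePoisson ast circ)
    (ϖ : A →ₗ[k] A →ₗ[k] k)
    (hϖsym : ∀ a₁ a₂ : A, ϖ a₁ a₂ = ϖ a₂ a₁)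
    (hϖnd : ∀ a : A, (∀ a' : A, ϖ a a' = 0) → a = 0)
    (hϖcoc : ∀ a₁ a₂ a₃ : A,
      ϖ (ast a₁ a₂ + ast a₂ a₁) a₃ = ϖ a₁ (ast a₂ a₃) + ϖ a₂ (ast a₁ a₃))
    (hϖcoc' : ∀ a₁ a₂ a₃ : A,
      ϖ (circ a₁ a₂) a₃ - ϖ a₁ (circ a₂ a₃) = ϖ (circ a₂ a₁) a₃ - ϖ a₂ (circ a₁ a₃))
    (dia : B →ₗ[k] B →ₗ[k] B) (hdia : IsPerm dia)
    (ω : B →ₗ[k] B →ₗ[k] k)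
    (hω₁ : ∀ b₁ b₂ : B, ω b₁ b₂ = - ω b₂ b₁)
    (hω₂ : ∀ b₁ : B, (∀ b₂ : B, ω b₁ b₂ = 0) → b₁ = 0)
    (hω₃ : ∀ b₁ b₂ b₃ : B, ω (dia b₁ b₂) b₃ = ω b₁ (dia b₂ b₃ - dia b₃ b₂))
    (m : A ⊗[k] B →ₗ[k] A ⊗[k] B →ₗ[k] A ⊗[k] B)
    (hm : ∀ (a₁ a₂ : A) (b₁ b₂ : B),
      m (a₁ ⊗ₜ[k] b₁) (a₂ ⊗ₜ[k] b₂)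
        = (ast a₁ a₂) ⊗ₜ[k] (dia b₁ b₂) + (ast a₂ a₁) ⊗ₜ[k] (dia b₂ b₁))
    (br : A ⊗[k] B →ₗ[k] A ⊗[k] B →ₗ[k] A ⊗[k] B)
    (hbr : ∀ (a₁ a₂ : A) (b₁ b₂ : B),
      br (a₁ ⊗ₜ[k] b₁) (a₂ ⊗ₜ[k] b₂)
        = (circ a₁ a₂) ⊗ₜ[k] (dia b₁ b₂) - (circ a₂ a₁) ⊗ₜ[k] (dia b₂ b₁))
    (Bf : A ⊗[k] B →ₗ[k] A ⊗[k] B →ₗ[k] k)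
    (hBf : ∀ (a₁ a₂ : A) (b₁ b₂ : B),
      Bf (a₁ ⊗ₜ[k] b₁) (a₂ ⊗ₜ[k] b₂) = ϖ a₁ a₂ * ω b₁ b₂)
    :
    IsPoisson m br ∧
    (∀ u v : A ⊗[k] B, Bf u v = - Bf v u) ∧
    (∀ u : A ⊗[k] B, (∀ v : A ⊗[k] B, Bf u v = 0) → u = 0) ∧
    (∀ u₁ u₂ u₃ : A ⊗[k] B,
      Bf (m u₁ u₂) u₃ + Bf (m u₂ u₃) u₁ + Bf (m u₃ u₁) u₂ = 0) ∧
    (∀ u₁ u₂ u₃ : A ⊗[k] B,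
      Bf (br u₁ u₂) u₃ + Bf (br u₂ u₃) u₁ + Bf (br u₃ u₁) u₂ = 0) := by
  obtain rfl : Bf = LinearMap.BilinForm.tmul ϖ ω :=
    TensorProduct.ext' fun a b => TensorProduct.ext' fun a' b' => by
      rw [hBf, LinearMap.BilinForm.tensorDistrib_tmul, smul_eq_mul, mul_comm]
  exact ⟨hA.isPoisson_induced hdia hm hbr,
    LinearMap.BilinForm.tmul_antisymm hϖsym hω₁,
    LinearMap.BilinForm.separatingLeft_tmul hϖnd hω₂,
    IsInducedMul.cyclic_tmul hϖsym hϖcoc hω₁ hω₃ hm,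
    IsInducedBracket.cyclic_tmul hϖsym hϖcoc' hω₁ hω₃ hbr⟩

theorem statement18 (k A B : Type) [Field k] [CharZero k]
    [AddCommGroup A] [Module k A] [FiniteDimensional k A]
    [AddCommGroup B] [Module k B] [FiniteDimensional k B]
    (ast circ : A →ₗ[k] A →ₗ[k] A) (hA : IsPrePoisson ast circ)
    (ϖ : A →ₗ[k] A →ₗ[k] k)
    (hϖsym : ∀ a₁ a₂ : A, ϖ a₁ a₂ = ϖ a₂ a₁)
    (hϖnd : ∀ a : A, (∀ a' : A, ϖ a a' = 0) → a = 0)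
    (hϖcoc : ∀ a₁ a₂ a₃ : A,
      ϖ (ast a₁ a₂ + ast a₂ a₁) a₃ = ϖ a₁ (ast a₂ a₃) + ϖ a₂ (ast a₁ a₃))
    (hϖcoc' : ∀ a₁ a₂ a₃ : A,
      ϖ (circ a₁ a₂) a₃ - ϖ a₁ (circ a₂ a₃) = ϖ (circ a₂ a₁) a₃ - ϖ a₂ (circ a₁ a₃))
    (dia : B →ₗ[k] B →ₗ[k] B) (hdia : IsPerm dia)
    (ω : B →ₗ[k] B →ₗ[k] k)
    (hω₁ : ∀ b₁ b₂ : B, ω b₁ b₂ = - ω b₂ b₁)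
    (hω₂ : ∀ b₁ : B, (∀ b₂ : B, ω b₁ b₂ = 0) → b₁ = 0)
    (hω₃ : ∀ b₁ b₂ b₃ : B, ω (dia b₁ b₂) b₃ = ω b₁ (dia b₂ b₃ - dia b₃ b₂))
    (m : A ⊗[k] B →ₗ[k] A ⊗[k] B →ₗ[k] A ⊗[k] B)
    (hm : ∀ (a₁ a₂ : A) (b₁ b₂ : B),
      m (a₁ ⊗ₜ[k] b₁) (a₂ ⊗ₜ[k] b₂)
        = (ast a₁ a₂) ⊗ₜ[k] (dia b₁ b₂) + (ast a₂ a₁) ⊗ₜ[k] (dia b₂ b₁))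
    (br : A ⊗[k] B →ₗ[k] A ⊗[k] B →ₗ[k] A ⊗[k] B)
    (hbr : ∀ (a₁ a₂ : A) (b₁ b₂ : B),
      br (a₁ ⊗ₜ[k] b₁) (a₂ ⊗ₜ[k] b₂)
        = (circ a₁ a₂) ⊗ₜ[k] (dia b₁ b₂) - (circ a₂ a₁) ⊗ₜ[k] (dia b₂ b₁))
    (Bf : A ⊗[k] B →ₗ[k] A ⊗[k] B →ₗ[k] k)
    (hBf : ∀ (a₁ a₂ : A) (b₁ b₂ : B),
      Bf (a₁ ⊗ₜ[k] b₁) (a₂ ⊗ₜ[k] b₂) = ϖ a₁ a₂ * ω b₁ b₂)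
    :
    IsPoisson m br ∧
    (∀ u v : A ⊗[k] B, Bf u v = - Bf v u) ∧
    (∀ u : A ⊗[k] B, (∀ v : A ⊗[k] B, Bf u v = 0) → u = 0) ∧
    (∀ u₁ u₂ u₃ : A ⊗[k] B,
      Bf (m u₁ u₂) u₃ + Bf (m u₂ u₃) u₁ + Bf (m u₃ u₁) u₂ = 0) ∧
    (∀ u₁ u₂ u₃ : A ⊗[k] B,
      Bf (br u₁ u₂) u₃ + Bf (br u₂ u₃) u₁ + Bf (br u₃ u₁) u₂ = 0) :=
  statement18_general k A B ast circ hA ϖ hϖsym hϖnd hϖcoc hϖcoc' dia hdia ω hω₁ hω₂ hω₃ m hm br hbr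
    Bf hBf
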